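/- arXiv:2407.06299 — 13 statements merged into one kernel-verified Lean document; each statement's English description precedes it below -/
import Mathlib

section
/- Reduction Theorem: Let G be a loopless digraph on a vertex set V, let P be a finite partially ordered set, and let k > 1. Then the k-walks of G admit a P-coloring if and only if the (k-1)-walks of G admit an A(P)-coloring, where A(P) is the poset of lower sets of P ordered by inclusion. -/
/-- A `k`-walk in the digraph `G` is a function `w : Fin k → V` such that
consecutive vertices are joined by an edge of `G`. -/
def IsWalk {V : Type*} (G : V → V → Prop) {k : ℕ} (w : Fin k → V) : Prop :=
  ∀ i : ℕ, ∀ h : i + 1 < k, G (w ⟨i, Nat.lt_of_succ_lt h⟩) (w ⟨i + 1, h⟩)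

theorem IsWalk.walkPrefix {V : Type*} {G : V → V → Prop} {k : ℕ} {u : Fin (k + 1) → V}
    (hu : IsWalk G u) : IsWalk G (fun i : Fin k => u i.castSucc) := by
  intro i h
  exact hu i (by omega)

theorem IsWalk.walkSuffix {V : Type*} {G : V → V → Prop} {k : ℕ} {u : Fin (k + 1) → V}
    (hu : IsWalk G u) : IsWalk G (fun i : Fin k => u i.succ) := by
  intro i h
  exact hu (i + 1) (by omega)

/-- The `k`-walks of `G`, as a subtype. -/
def Walks {V : Type*} (G : V → V → Prop) (k : ℕ) : Type _ :=
  {w : Fin k → V // IsWalk G w}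

/-- A `P`-coloring of the `k`-walks of `G`: for every `(k+1)`-walk `u`,
the color of its prefix `k`-walk is not `≤` the color of its suffix `k`-walk. -/
def IsPColoring {V : Type*} {P : Type*} [Preorder P] (G : V → V → Prop) (k : ℕ)
    (c : Walks G k → P) : Prop :=
  ∀ u : Walks G (k + 1),
    ¬ c ⟨fun i => u.1 i.castSucc, u.2.walkPrefix⟩ ≤ c ⟨fun i => u.1 i.succ, u.2.walkSuffix⟩

theorem aux_isWalk {V : Type*} {G : V → V → Prop} {m : ℕ} (hm : 1 ≤ m)
    {u t : Fin (m + 1) → V} (hu : IsWalk G u) (htw : IsWalk G t)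
    (ht : ∀ i : Fin m, t i.castSucc = u i.succ) :
    IsWalk G (Fin.snoc u (t (Fin.last m)) : Fin (m + 2) → V) := by
  intro i h
  by_cases h2 : i + 1 < m + 1
  · have g1 : (⟨i, Nat.lt_of_succ_lt h⟩ : Fin (m+2)) = Fin.castSucc ⟨i, Nat.lt_of_succ_lt h2⟩ :=
      rfl
    have g2 : (⟨i+1, h⟩ : Fin (m+2)) = Fin.castSucc ⟨i+1, h2⟩ := rfl
    rw [g1, g2, Fin.snoc_castSucc, Fin.snoc_castSucc]
    exact hu i h2
  · have hi : i = m := by omega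
    have g1 : (⟨i, Nat.lt_of_succ_lt h⟩ : Fin (m+2)) = Fin.castSucc ⟨m, by omega⟩ :=
      Fin.ext hi
    have g2 : (⟨i+1, h⟩ : Fin (m+2)) = Fin.last (m+1) :=
      Fin.ext (show i+1 = m+1 by omega)
    rw [g1, g2, Fin.snoc_castSucc, Fin.snoc_last]
    -- goal : G (u ⟨m, _⟩) (t (Fin.last m))
    have hw := htw (m-1) (by omega)
    have hA : t (Fin.castSucc ⟨m-1, by omega⟩) = u ⟨m, by omega⟩ :=
      (ht ⟨m-1, by omega⟩).trans (congrArg u (Fin.ext (show m-1+1 = m by omega)))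
    have hB : t ⟨m-1+1, by omega⟩ = t (Fin.last m) :=
      congrArg t (Fin.ext (show m-1+1 = m by omega))
    have step1 : G (t ⟨m-1, by omega⟩) (t (Fin.last m)) :=
      (congrArg (G (t ⟨m-1, by omega⟩)) hB).mp hw
    exact (congrArg (fun z => G z (t (Fin.last m))) hA).mp step1

theorem aux_suffix {V : Type*} {m : ℕ}
    {u t : Fin (m + 1) → V}
    (ht : ∀ i : Fin m, t i.castSucc = u i.succ) (i : Fin (m + 1)) :
    (Fin.snoc u (t (Fin.last m)) : Fin (m + 2) → V) i.succ = t i := by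
  induction i using Fin.lastCases with
  | last =>
    have g : Fin.succ (Fin.last m) = Fin.last (m+1) := rfl
    rw [g, Fin.snoc_last]
  | cast j =>
    have g : Fin.succ (Fin.castSucc j) = Fin.castSucc (Fin.succ j) := rfl
    rw [g, Fin.snoc_castSucc, ht j]

/-- **Reduction Theorem.** For a loopless digraph `G`, a finite poset `P` and `k > 1`,
the `k`-walks of `G` admit a `P`-coloring iff the `(k-1)`-walks of `G` admit an
`A(P)`-coloring, where `A(P)` is the poset of lower sets of `P` ordered by inclusion. -/
theorem reduction_theorem {V : Type*} (G : V → V → Prop) (hG : ∀ v, ¬ G v v)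
    (P : Type*) [PartialOrder P] [Fintype P] (k : ℕ) (hk : 1 < k) :
    (∃ c : Walks G k → P, IsPColoring G k c) ↔
      (∃ c' : Walks G (k - 1) → LowerSet P, IsPColoring G (k - 1) c') := by
  obtain ⟨m, rfl⟩ : ∃ m, k = m + 1 := ⟨k - 1, by omega⟩
  have hm : 1 ≤ m := by omega
  show (∃ c : Walks G (m+1) → P, IsPColoring G (m+1) c) ↔
      (∃ c0 : Walks G m → LowerSet P, IsPColoring G m c0)
  constructor
  · rintro ⟨c, hc⟩
    refine ⟨fun w => ⟨{p | ∃ u : Walks G (m+1),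
        (∀ i : Fin m, u.1 i.castSucc = w.1 i) ∧ p ≤ c u}, ?_⟩, ?_⟩
    · rintro a b hba ⟨u, hu, hle⟩
      exact ⟨u, hu, hba.trans hle⟩
    · intro u hle
      have hle' : ∀ p : P, (∃ a : Walks G (m+1),
          (∀ i : Fin m, a.1 i.castSucc = u.1 i.castSucc) ∧ p ≤ c a) →
          (∃ a : Walks G (m+1), (∀ i : Fin m, a.1 i.castSucc = u.1 i.succ) ∧ p ≤ c a) :=
        fun p hp => hle hp
      obtain ⟨t, ht, hct⟩ := hle' (c u) ⟨u, fun i => rfl, le_refl _⟩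
      have hvw := aux_isWalk hm u.2 t.2 ht
      have epre : (⟨fun i => (Fin.snoc u.1 (t.1 (Fin.last m)) : Fin (m+2) → V) i.castSucc,
          hvw.walkPrefix⟩ : Walks G (m+1)) = u := by
        apply Subtype.ext
        show (fun i : Fin (m+1) =>
          (Fin.snoc u.1 (t.1 (Fin.last m)) : Fin (m+2) → V) i.castSucc) = u.1
        funext i
        rw [Fin.snoc_castSucc]
      have esuf : (⟨fun i => (Fin.snoc u.1 (t.1 (Fin.last m)) : Fin (m+2) → V) i.succ,
          hvw.walkSuffix⟩ : Walks G (m+1)) = t := by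
        apply Subtype.ext
        show (fun i : Fin (m+1) =>
          (Fin.snoc u.1 (t.1 (Fin.last m)) : Fin (m+2) → V) i.succ) = t.1
        funext i
        exact aux_suffix ht i
      have hfin := hc ⟨_, hvw⟩
      rw [epre, esuf] at hfin
      exact hfin hct
  · rintro ⟨c', hc'⟩
    have key : ∀ u : Walks G (m+1), ∃ p,
        p ∈ c' ⟨fun i => u.1 i.castSucc, u.2.walkPrefix⟩ ∧
        p ∉ c' ⟨fun i => u.1 i.succ, u.2.walkSuffix⟩ := by
      intro u
      have h := hc' u
      by_contra hcon
      push_neg at hcon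
      exact h (fun p hp => hcon p hp)
    choose c h1 h2 using key
    refine ⟨c, ?_⟩
    intro v hle
    have hmid : (⟨fun i => (⟨fun i => v.1 i.castSucc, v.2.walkPrefix⟩ : Walks G (m+1)).1 i.succ,
          (v.2.walkPrefix).walkSuffix⟩ : Walks G m)
        = ⟨fun i => (⟨fun i => v.1 i.succ, v.2.walkSuffix⟩ : Walks G (m+1)).1 i.castSucc,
          (v.2.walkSuffix).walkPrefix⟩ := by
      apply Subtype.ext; funext i
      show v.1 (Fin.castSucc (Fin.succ i)) = v.1 (Fin.succ (Fin.castSucc i))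
      exact congrArg v.1 (Fin.ext rfl)
    have h2' := h2 ⟨fun i => v.1 i.castSucc, v.2.walkPrefix⟩
    rw [hmid] at h2'
    exact h2' ((c' _).lower hle (h1 ⟨fun i => v.1 i.succ, v.2.walkSuffix⟩))
end

section
/- Expansion Theorem: Let G be a loopless digraph, P a poset, S a set, and suppose there is a representation r : P → Set S such that for all x, y ∈ P, x ≤ y if and only if r(x) ⊆ r(y). If the k-walks of G admit a P-coloring, then the (k+1)-walks of G admit an S-coloring, where S carries the trivial (discrete) partial order; that is, there is a function c' from (k+1)-walks of G to S such that for every (k+2)-walk u, c' applied to the first k+1 vertices of u is not equal to c' applied to the last k+1 vertices of u. -/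
/-- **Expansion Theorem.** Suppose the poset `P` is represented by sets, via
`r : P → Set S` with `x ≤ y ↔ r x ⊆ r y`.  If the `k`-walks of a loopless digraph `G`
admit a `P`-coloring, then the `(k+1)`-walks of `G` admit an `S`-coloring, where `S`
carries the trivial order: the colors of the prefix and suffix `(k+1)`-walks of any
`(k+2)`-walk are distinct. -/
theorem expansion_theorem {V : Type*} (G : V → V → Prop) (hG : ∀ v, ¬ G v v)
    (P : Type*) [PartialOrder P] (S : Type*) (r : P → Set S)
    (hr : ∀ x y : P, x ≤ y ↔ r x ⊆ r y)
    (k : ℕ) (hk : 1 ≤ k)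
    (h : ∃ c : Walks G k → P, IsPColoring G k c) :
    ∃ c' : Walks G (k + 1) → S, ∀ u : Walks G (k + 2),
      c' ⟨fun i => u.1 i.castSucc, u.2.walkPrefix⟩ ≠ c' ⟨fun i => u.1 i.succ, u.2.walkSuffix⟩ := by
  obtain ⟨c, hc⟩ := h
  have key : ∀ w : Walks G (k + 1), ∃ z : S,
      z ∈ r (c ⟨fun i => w.1 i.castSucc, w.2.walkPrefix⟩) ∧
      z ∉ r (c ⟨fun i => w.1 i.succ, w.2.walkSuffix⟩) := by
    intro w
    have := hc w
    rw [hr] at this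
    exact Set.not_subset.mp this
  choose c' hmem hnmem using key
  refine ⟨c', fun u => ?_⟩
  set w1 : Walks G (k + 1) := ⟨fun i => u.1 i.castSucc, u.2.walkPrefix⟩
  set w2 : Walks G (k + 1) := ⟨fun i => u.1 i.succ, u.2.walkSuffix⟩
  intro heq
  have h1 := hnmem w1
  have h2 := hmem w2
  have hmid : (⟨fun i => w1.1 i.succ, w1.2.walkSuffix⟩ : Walks G k)
      = ⟨fun i => w2.1 i.castSucc, w2.2.walkPrefix⟩ := by
    apply Subtype.ext
    funext i
    show u.1 i.succ.castSucc = u.1 i.castSucc.succ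
    exact congrArg u.1 (Fin.ext (by simp))
  rw [hmid, heq] at h1
  exact h1 h2
end

section
/- Strengthened Expansion for distributive lattices: Let G be a loopless digraph, Q a poset, and suppose the k-walks of G admit an A(Q)-coloring, where A(Q) is the poset of lower sets of Q ordered by inclusion. Then the (k+1)-walks of G admit a Q-coloring, i.e. there is a function c' from (k+1)-walks of G to Q such that for every (k+2)-walk u, c' applied to the first k+1 vertices of u is not ≤ c' applied to the last k+1 vertices of u. -/
namespace Walks

variable {V : Type*} {G : V → V → Prop} {k : ℕ}

def init (u : Walks G (k + 1)) : Walks G k := ⟨fun i => u.1 i.castSucc, u.2.walkPrefix⟩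

def tail (u : Walks G (k + 1)) : Walks G k := ⟨fun i => u.1 i.succ, u.2.walkSuffix⟩

theorem tail_init (u : Walks G (k + 2)) : u.init.tail = u.tail.init := rfl

end Walks

namespace IsPColoring

variable {V : Type*} {G : V → V → Prop} {Q : Type*} [Preorder Q] {k : ℕ}
  {c : Walks G k → LowerSet Q}

theorem exists_mem_init_notMem_tail (hc : IsPColoring G k c) (w : Walks G (k + 1)) :
    ∃ q ∈ c w.init, q ∉ c w.tail :=
  Set.not_subset.mp (hc w)

noncomputable def expand (hc : IsPColoring G k c) (w : Walks G (k + 1)) : Q :=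
  (hc.exists_mem_init_notMem_tail w).choose

theorem expand_mem_init (hc : IsPColoring G k c) (w : Walks G (k + 1)) :
    hc.expand w ∈ c w.init :=
  (hc.exists_mem_init_notMem_tail w).choose_spec.1

theorem expand_notMem_tail (hc : IsPColoring G k c) (w : Walks G (k + 1)) :
    hc.expand w ∉ c w.tail :=
  (hc.exists_mem_init_notMem_tail w).choose_spec.2

theorem expand_isPColoring (hc : IsPColoring G k c) : IsPColoring G (k + 1) hc.expand := by
  intro u hle
  have hmem : hc.expand u.tail ∈ c u.init.tail := by
    rw [Walks.tail_init]
    exact hc.expand_mem_init u.tail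
  exact hc.expand_notMem_tail u.init ((c _).lower hle hmem)

end IsPColoring

theorem strengthened_expansion_theorem_general {V : Type*} (G : V → V → Prop)
    (Q : Type*) [PartialOrder Q] (k : ℕ)
    (h : ∃ c : Walks G k → LowerSet Q, IsPColoring G k c) :
    ∃ c' : Walks G (k + 1) → Q, IsPColoring G (k + 1) c' :=
  let ⟨_, hc⟩ := h
  ⟨hc.expand, hc.expand_isPColoring⟩

/-- **Strengthened Expansion Theorem for distributive lattices.** If the `k`-walks of a
loopless digraph `G` admit an `A(Q)`-coloring (where `A(Q)` is the poset of lower sets of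
the poset `Q`, ordered by inclusion), then the `(k+1)`-walks of `G` admit a `Q`-coloring. -/
theorem strengthened_expansion_theorem {V : Type*} (G : V → V → Prop) (hG : ∀ v, ¬ G v v)
    (Q : Type*) [PartialOrder Q] (k : ℕ) (hk : 1 ≤ k)
    (h : ∃ c : Walks G k → LowerSet Q, IsPColoring G k c) :
    ∃ c' : Walks G (k + 1) → Q, IsPColoring G (k + 1) c' :=
  strengthened_expansion_theorem_general G Q k h
end

section
/- Bounded monochromatic walks via product-of-chains vertex coloring: Let G be a loopless digraph, n ≥ 1, and l : Fin n → ℕ with l i ≥ 1 for all i. Then the following are equivalent: (a) there exists a coloring d of the edges of G (ordered pairs (u,v) with G u v) by Fin n such that for every i there is no walk of length l i + 1 (i.e., no (l i + 2)-walk) all of whose consecutive edges receive color i under d; (b) there exists a function c from the vertices of G to the product poset P = Π i, Fin (l i + 1) (componentwise order) such that G u v implies c u is not ≤ c v. -/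
/-- **Bounded monochromatic walks via product-of-chains vertex coloring.**
For a loopless digraph `G`, `n ≥ 1` and lengths `l i ≥ 1`, the edges of `G` can be
`Fin n`-colored with no walk of length `l i + 1` all of whose edges have color `i`,
iff the vertices of `G` admit a coloring by the product poset `Π i, Fin (l i + 1)`
such that `G u v` implies `c u ≰ c v`. -/
theorem bounded_monochromatic_walks {V : Type*} (G : V → V → Prop) (hG : ∀ v, ¬ G v v)
    (n : ℕ) (hn : 1 ≤ n) (l : Fin n → ℕ) (hl : ∀ i, 1 ≤ l i) :
    (∃ d : {e : V × V // G e.1 e.2} → Fin n,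
      ∀ i : Fin n, ∀ w : Fin (l i + 2) → V, ∀ hw : IsWalk G w,
        ¬ (∀ j : ℕ, ∀ hj : j + 1 < l i + 2,
            d ⟨(w ⟨j, Nat.lt_of_succ_lt hj⟩, w ⟨j + 1, hj⟩), hw j hj⟩ = i)) ↔
    (∃ c : V → (∀ i : Fin n, Fin (l i + 1)), ∀ u v : V, G u v → ¬ c u ≤ c v) := by
  classical
  constructor
  · rintro ⟨d, hd⟩
    set P : V → Fin n → ℕ → Prop := fun v i m =>
      ∃ w : Fin (m+1) → V, ∃ hw : IsWalk G w, w ⟨0, Nat.succ_pos m⟩ = v ∧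
        ∀ j : ℕ, ∀ hj : j + 1 < m + 1,
          d ⟨(w ⟨j, Nat.lt_of_succ_lt hj⟩, w ⟨j+1, hj⟩), hw j hj⟩ = i with hPdef
    have hP0 : ∀ v i, P v i 0 := by
      intro v i
      exact ⟨fun _ => v, fun j hj => absurd hj (by omega), rfl,
        fun j hj => absurd hj (by omega)⟩
    have hPbound : ∀ v i m, P v i m → m ≤ l i := by
      rintro v i m ⟨w, hw, -, hcol⟩
      by_contra hm
      push_neg at hm
      have hw' : IsWalk G (fun j : Fin (l i + 2) => w ⟨j.val, by omega⟩) :=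
        fun j hj => hw j (by omega)
      exact hd i _ hw' (fun j hj => hcol j (by omega))
    have prepend : ∀ (u v : V) (huv : G u v) (m : ℕ),
        P v (d ⟨(u, v), huv⟩) m → P u (d ⟨(u, v), huv⟩) (m + 1) := by
      rintro u v huv m ⟨w, hw, hw0, hcol⟩
      refine ⟨fun j => match j with
        | ⟨0, _⟩ => u
        | ⟨k+1, h⟩ => w ⟨k, by omega⟩, ?_, rfl, ?_⟩
      · intro j hj
        match j with
        | 0 =>
          show G u (w ⟨0, Nat.succ_pos m⟩)
          rw [hw0]; exact huv
        | (k+1 : ℕ) => exact hw k (by omega)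
      · intro j hj
        match j with
        | 0 =>
          show d ⟨(u, w ⟨0, Nat.succ_pos m⟩), _⟩ = d ⟨(u, v), huv⟩
          apply congrArg
          apply Subtype.ext
          show (u, w ⟨0, Nat.succ_pos m⟩) = (u, v)
          rw [hw0]
        | (k+1 : ℕ) => exact hcol k (by omega)
    refine ⟨fun v i => ⟨Nat.findGreatest (P v i) (l i),
      Nat.lt_succ_of_le (Nat.findGreatest_le _)⟩, ?_⟩
    intro u v huv hle
    set i := d ⟨(u, v), huv⟩ with hi
    have hPv : P v i (Nat.findGreatest (P v i) (l i)) :=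
      Nat.findGreatest_spec (Nat.zero_le _) (hP0 v i)
    have hPu : P u i (Nat.findGreatest (P v i) (l i) + 1) := prepend u v huv _ hPv
    have hb : Nat.findGreatest (P v i) (l i) + 1 ≤ l i := hPbound u i _ hPu
    have hge : Nat.findGreatest (P v i) (l i) + 1 ≤ Nat.findGreatest (P u i) (l i) :=
      Nat.le_findGreatest hb hPu
    have := hle i
    rw [Fin.le_def] at this
    simp only at this
    omega
  · rintro ⟨c, hc⟩
    have key : ∀ e : {e : V × V // G e.1 e.2}, ∃ i, c e.1.2 i < c e.1.1 i := by
      intro e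
      have h := hc e.1.1 e.1.2 e.2
      rw [Pi.le_def] at h
      push_neg at h
      exact h
    refine ⟨fun e => (key e).choose, ?_⟩
    intro i w hw hmono
    have step : ∀ j : ℕ, ∀ hj : j + 1 < l i + 2,
        (c (w ⟨j+1, hj⟩) i : ℕ) < (c (w ⟨j, Nat.lt_of_succ_lt hj⟩) i : ℕ) := by
      intro j hj
      have h := (key ⟨(w ⟨j, Nat.lt_of_succ_lt hj⟩, w ⟨j+1, hj⟩), hw j hj⟩).choose_spec
      have hm : (key ⟨(w ⟨j, Nat.lt_of_succ_lt hj⟩, w ⟨j+1, hj⟩), hw j hj⟩).choose = i :=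
        hmono j hj
      rw [hm] at h
      exact h
    have main : ∀ j : ℕ, ∀ hj : j < l i + 2,
        (c (w ⟨j, hj⟩) i : ℕ) + j ≤ (c (w ⟨0, by omega⟩) i : ℕ) := by
      intro j
      induction j with
      | zero => intro hj; simp
      | succ k ih =>
        intro hj
        have h1 := step k hj
        have h2 := ih (by omega)
        omega
    have h := main (l i + 1) (by omega)
    have := (c (w ⟨l i + 1, by omega⟩) i).isLt
    omega
end

section
/- Generalized bounded monochromatic runs for k-walks: Let G be a loopless digraph, k ≥ 2, n ≥ 1, and l : Fin n → ℕ with l i ≥ 1 for all i. Then the following are equivalent: (a) there exists a coloring c of the k-walks of G by Fin n such that for every i and every walk (v_1, ..., v_{k+l-1}) of G, if the l consecutive k-walks (v_1...v_k), (v_2...v_{k+1}), ..., (v_l...v_{k+l-1}) all receive color i, then l ≤ l i; (b) the (k-1)-walks of G admit a P-coloring, where P is the product poset Π i, Fin (l i + 1) with componentwise order. -/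
theorem IsWalk.window {V : Type*} {G : V → V → Prop} {m k j : ℕ} {w : Fin m → V}
    (hw : IsWalk G w) (hjk : j + k ≤ m) :
    IsWalk G (fun t : Fin k => w ⟨j + t.1, by omega⟩) := by
  intro i h
  exact hw (j + i) (by omega)

private theorem chain_desc (g : ℕ → ℕ) (m : ℕ) (hstep : ∀ j, j ≤ m → g (j + 1) < g j) :
    g (m + 1) + (m + 1) ≤ g 0 := by
  induction m with
  | zero => have := hstep 0 le_rfl; omega
  | succ m ih =>
    have h1 := ih fun j hj => hstep j (by omega)
    have h2 := hstep (m + 1) le_rfl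
    omega

/-- `RunP G K c q i r`: there is a walk on `K + 1 + r` vertices starting with the
`(K+1)`-walk `q` all of whose `r` many `(K+2)`-windows get color `i` under `c`. -/
def RunP {V : Type*} (G : V → V → Prop) {n : ℕ} (K : ℕ)
    (c : Walks G (K + 2) → Fin n) (q : Walks G (K + 1)) (i : Fin n) (r : ℕ) : Prop :=
  ∃ u : Walks G (K + 1 + r),
    (∀ t : Fin (K + 1), u.1 ⟨t.1, by omega⟩ = q.1 t) ∧
    ∀ j : ℕ, ∀ _ : j < r,
      c ⟨fun t : Fin (K + 2) => u.1 ⟨j + t.1, by omega⟩, u.2.window (by omega)⟩ = i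

/-- Auxiliary value function used for the descending chain argument. -/
def gAux {V : Type*} {G : V → V → Prop} {n : ℕ} {l : Fin n → ℕ} (K m : ℕ)
    (c' : Walks G (K + 1) → ∀ i : Fin n, Fin (l i + 1)) {w : Fin (K + 2 + m) → V}
    (hw : IsWalk G w) (i : Fin n) (j : ℕ) : ℕ :=
  if h : j + (K + 1) ≤ K + 2 + m then
    (c' ⟨fun t : Fin (K + 1) => w ⟨j + t.1, by omega⟩, hw.window h⟩ i).1
  else 0

/-- **Generalized bounded monochromatic runs for `k`-walks.** For a loopless digraph `G`,
`k ≥ 2`, `n ≥ 1` and lengths `l i ≥ 1`: the `k`-walks of `G` can be `Fin n`-colored so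
that whenever all `m + 1` consecutive `k`-walks inside a walk on `k + m` vertices receive
color `i`, one has `m + 1 ≤ l i`, iff the `(k-1)`-walks of `G` admit a coloring by the
product poset `Π i, Fin (l i + 1)`. -/
theorem generalized_bounded_monochromatic_runs {V : Type*} (G : V → V → Prop)
    (hG : ∀ v, ¬ G v v) (k : ℕ) (hk : 2 ≤ k) (n : ℕ) (hn : 1 ≤ n)
    (l : Fin n → ℕ) (hl : ∀ i, 1 ≤ l i) :
    (∃ c : Walks G k → Fin n,
      ∀ i : Fin n, ∀ m : ℕ, ∀ w : Fin (k + m) → V, ∀ hw : IsWalk G w,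
        (∀ j : ℕ, ∀ hj : j ≤ m,
          c ⟨fun t : Fin k => w ⟨j + t.1, by omega⟩, hw.window (by omega)⟩ = i) →
        m + 1 ≤ l i) ↔
    (∃ c' : Walks G (k - 1) → (∀ i : Fin n, Fin (l i + 1)), IsPColoring G (k - 1) c') := by
  classical
  obtain ⟨K, rfl⟩ : ∃ K, k = K + 2 := ⟨k - 2, by omega⟩
  constructor
  · -- (a) → (b)
    rintro ⟨c, hc⟩
    have hbound : ∀ q : Walks G (K + 1), ∀ i : Fin n, ∀ r : ℕ, RunP G K c q i r → r ≤ l i := by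
      intro q i r
      cases r with
      | zero => exact fun _ => Nat.zero_le _
      | succ m =>
        rintro ⟨u', hagree, hwin⟩
        have hw' : IsWalk G (fun t : Fin (K + 2 + m) => u'.1 ⟨t.1, by omega⟩) :=
          fun j h => u'.2 j (by omega)
        exact hc i m _ hw' (fun j hj => hwin j (by omega))
    refine ⟨fun q i => ⟨Nat.findGreatest (RunP G K c q i) (l i),
      Nat.lt_succ_of_le (Nat.findGreatest_le _)⟩, ?_⟩
    unfold IsPColoring
    intro u hle
    let upre : Walks G (K + 1) := ⟨fun t : Fin (K + 1) => u.1 t.castSucc, u.2.walkPrefix⟩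
    let usuf : Walks G (K + 1) := ⟨fun t : Fin (K + 1) => u.1 t.succ, u.2.walkSuffix⟩
    let i : Fin n := c ⟨u.1, u.2⟩
    have hval : Nat.findGreatest (RunP G K c upre i) (l i) ≤
        Nat.findGreatest (RunP G K c usuf i) (l i) := hle i
    set r := Nat.findGreatest (RunP G K c usuf i) (l i) with hr
    have hP0 : RunP G K c usuf i 0 :=
      ⟨⟨fun t : Fin (K + 1 + 0) => usuf.1 ⟨t.1, by omega⟩, fun j h => usuf.2 j (by omega)⟩,
        fun t => rfl, fun j hj => absurd hj (Nat.not_lt_zero j)⟩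
    have hPr : RunP G K c usuf i r := Nat.findGreatest_spec (Nat.zero_le (l i)) hP0
    obtain ⟨u', hagree, hwin⟩ := hPr
    let v : Fin (K + 1 + (r + 1)) → V := fun t =>
      if t.1 = 0 then u.1 ⟨0, by omega⟩ else u'.1 ⟨t.1 - 1, by omega⟩
    have hvlow : ∀ j : ℕ, ∀ hj : j < K + 2, v ⟨j, by omega⟩ = u.1 ⟨j, by omega⟩ := by
      intro j hj
      by_cases h0 : j = 0
      · subst h0
        exact if_pos rfl
      · refine (if_neg (show ¬ j = 0 from h0)).trans ?_
        refine (hagree ⟨j - 1, by omega⟩).trans ?_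
        show u.1 (Fin.succ ⟨j - 1, by omega⟩) = u.1 ⟨j, by omega⟩
        apply congrArg
        simp only [Fin.succ_mk, Fin.mk.injEq]
        omega
    have hvhigh : ∀ j : ℕ, 1 ≤ j → ∀ h2 : j < K + 1 + (r + 1),
        v ⟨j, h2⟩ = u'.1 ⟨j - 1, by omega⟩ := by
      intro j h1 h2
      exact if_neg (show ¬ j = 0 by omega)
    have hvwalk : IsWalk G v := by
      intro j h
      rcases Nat.eq_zero_or_pos j with h0 | h0
      · subst h0
        rw [hvlow 0 (by omega), hvlow (0 + 1) (by omega)]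
        exact u.2 0 (by omega)
      · rw [hvhigh j (by omega) (by omega), hvhigh (j + 1) (by omega) (by omega)]
        have h3 := u'.2 (j - 1) (by omega)
        convert h3 using 2
        simp only [Fin.mk.injEq]
        omega
    have hagreeNew : ∀ t : Fin (K + 1), v ⟨t.1, by omega⟩ = upre.1 t := by
      intro t
      rw [hvlow t.1 (by omega)]
      rfl
    have hVwin : ∀ j : ℕ, ∀ hj : j < r + 1,
        c ⟨fun t : Fin (K + 2) => v ⟨j + t.1, by omega⟩, hvwalk.window (by omega)⟩ = i := by
      intro j hj
      rcases Nat.eq_zero_or_pos j with h0 | h0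
      · subst h0
        have e : (⟨fun t : Fin (K + 2) => v ⟨0 + t.1, by omega⟩, hvwalk.window (by omega)⟩ :
            Walks G (K + 2)) = ⟨u.1, u.2⟩ := by
          apply Subtype.ext
          funext t
          show v ⟨0 + t.1, _⟩ = u.1 t
          rw [hvlow (0 + t.1) (by omega)]
          apply congrArg
          simp [Fin.ext_iff]
        rw [e]
      · have e : (⟨fun t : Fin (K + 2) => v ⟨j + t.1, by omega⟩, hvwalk.window (by omega)⟩ :
            Walks G (K + 2)) =
            ⟨fun t : Fin (K + 2) => u'.1 ⟨j - 1 + t.1, by omega⟩, u'.2.window (by omega)⟩ := by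
          apply Subtype.ext
          funext t
          show v ⟨j + t.1, _⟩ = u'.1 ⟨j - 1 + t.1, _⟩
          rw [hvhigh (j + t.1) (by omega) (by omega)]
          apply congrArg
          simp only [Fin.mk.injEq]
          omega
        rw [e]
        exact hwin (j - 1) (by omega)
    have hPnew : RunP G K c upre i (r + 1) := ⟨⟨v, hvwalk⟩, hagreeNew, hVwin⟩
    have hbig : r + 1 ≤ Nat.findGreatest (RunP G K c upre i) (l i) :=
      Nat.le_findGreatest (hbound upre i (r + 1) hPnew) hPnew
    omega
  · -- (b) → (a)
    rintro ⟨c', hc'⟩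
    have key : ∀ u : Walks G (K + 2), ∃ i : Fin n,
        c' ⟨fun t : Fin (K + 1) => u.1 t.succ, u.2.walkSuffix⟩ i <
        c' ⟨fun t : Fin (K + 1) => u.1 t.castSucc, u.2.walkPrefix⟩ i := by
      intro u
      by_contra hcon
      push_neg at hcon
      exact hc' u hcon
    refine ⟨fun w => (key w).choose, ?_⟩
    intro i m w hw hmono
    set g : ℕ → ℕ := gAux K m c' hw i with hg
    have hstep : ∀ j, j ≤ m → g (j + 1) < g j := by
      intro j hj
      let W : Walks G (K + 2) :=
        ⟨fun t : Fin (K + 2) => w ⟨j + t.1, by omega⟩, hw.window (by omega)⟩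
      have hci : (key W).choose = i := hmono j hj
      have hcW := (key W).choose_spec
      rw [hci] at hcW
      have e1 : g j = (c' ⟨fun t : Fin (K + 1) => W.1 t.castSucc, W.2.walkPrefix⟩ i).1 :=
        dif_pos (show j + (K + 1) ≤ K + 2 + m by omega)
      have e2 : g (j + 1) =
          (c' ⟨fun t : Fin (K + 1) => w ⟨j + 1 + t.1, by omega⟩, hw.window (by omega)⟩ i).1 :=
        dif_pos (show (j + 1) + (K + 1) ≤ K + 2 + m by omega)
      have e3 : (⟨fun t : Fin (K + 1) => W.1 t.succ, W.2.walkSuffix⟩ : Walks G (K + 1)) =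
          ⟨fun t : Fin (K + 1) => w ⟨j + 1 + t.1, by omega⟩, hw.window (by omega)⟩ := by
        apply Subtype.ext
        funext t
        show w ⟨j + (Fin.succ t).1, _⟩ = w ⟨j + 1 + t.1, _⟩
        apply congrArg
        simp only [Fin.mk.injEq, Fin.val_succ]
        omega
      rw [e3] at hcW
      rw [e1, e2]
      exact hcW
    have hchain := chain_desc g m hstep
    have hg0 : g 0 ≤ l i := by
      have e0 : g 0 =
          (c' ⟨fun t : Fin (K + 1) => w ⟨0 + t.1, by omega⟩, hw.window (by omega)⟩ i).1 :=
        dif_pos (show 0 + (K + 1) ≤ K + 2 + m by omega)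
      rw [e0]
      exact Fin.is_le _
    omega
end

section
/- Odd cycle obstruction: Let G be a loopless digraph that contains a directed cycle of odd length m ≥ 3, i.e., vertices v_1, ..., v_m with G v_i v_{i+1} for 1 ≤ i < m and G v_m v_1. If P is a poset with fewer than 3 elements, then for every k ≥ 1 there is no P-coloring of the k-walks of G. -/
/-! Reading the cycle cyclically, the `k`-walks starting at positions `j = 0, 1, 2, …` form an
`m`-periodic sequence whose colours satisfy `c j ≰ c (j + 1)`, so consecutive colours differ.
With at most two colours this makes the colour sequence `2`-periodic as well, and since `m` is
odd, `c 0 = c m = c 1`, a contradiction. -/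

open Function

section TwoValued

variable {α : Type*} [Fintype α] {p : ℕ → α}

theorem periodic_two_of_ne_succ (hα : Fintype.card α ≤ 2) (hp : ∀ j, p j ≠ p (j + 1)) :
    Periodic p 2 := by
  intro j
  obtain ⟨x, y, hxy, hval⟩ :=
    Fintype.exists_ne_map_eq_of_card_lt ![p j, p (j + 1), p (j + 2)] (by rw [Fintype.card_fin]; omega)
  have h01 := hp j
  have h12 := hp (j + 1)
  fin_cases x <;> fin_cases y <;> simp_all [eq_comm]

theorem Function.Periodic.not_odd_of_ne_succ (hα : Fintype.card α ≤ 2) {m : ℕ}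
    (hper : Periodic p m) (hp : ∀ j, p j ≠ p (j + 1)) : ¬ Odd m := by
  rintro ⟨t, rfl⟩
  apply hp 0
  calc p 0 = p (1 + t * 2) := by rw [← hper 0]; ring_nf
    _ = p 1 := (periodic_two_of_ne_succ hα hp).nat_mul t 1

end TwoValued

section ShiftWalk

variable {V : Type*} {G : V → V → Prop} {f : ℕ → V}

theorem isWalk_shift (hf : ∀ j, G (f j) (f (j + 1))) (k j : ℕ) :
    IsWalk G (fun i : Fin k => f (j + i)) :=
  fun i _ => hf (j + i)

def shiftWalk (hf : ∀ j, G (f j) (f (j + 1))) (k j : ℕ) : Walks G k :=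
  ⟨fun i => f (j + i), isWalk_shift hf k j⟩

theorem Function.Periodic.shiftWalk (hf : ∀ j, G (f j) (f (j + 1))) {m : ℕ}
    (hper : Periodic f m) (k : ℕ) : Periodic (shiftWalk hf k) m := by
  intro j
  apply Subtype.ext
  funext i
  change f (j + m + i) = f (j + i)
  rw [add_right_comm, hper]

theorem IsPColoring.not_le_shiftWalk_succ {P : Type*} [Preorder P] {k : ℕ} {c : Walks G k → P}
    (hc : IsPColoring G k c) (hf : ∀ j, G (f j) (f (j + 1))) (j : ℕ) :
    ¬ c (shiftWalk hf k j) ≤ c (shiftWalk hf k (j + 1)) := by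
  convert hc (shiftWalk hf (k + 1) j) using 2
  · rfl
  congr 1
  apply Subtype.ext
  funext i
  change f (j + 1 + i) = f (j + (i + 1))
  rw [add_right_comm, add_assoc]

theorem not_isPColoring_of_odd_periodic {P : Type*} [Preorder P] [Fintype P]
    (hP : Fintype.card P ≤ 2) (hf : ∀ j, G (f j) (f (j + 1))) {m : ℕ} (hper : Periodic f m)
    (hodd : Odd m) (k : ℕ) (c : Walks G k → P) : ¬ IsPColoring G k c := fun hc =>
  ((hper.shiftWalk hf k).comp c).not_odd_of_ne_succ hP
    (fun j h => hc.not_le_shiftWalk_succ hf j h.le) hodd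

end ShiftWalk

theorem adj_mod_of_cycle {V : Type*} {G : V → V → Prop} {m : ℕ} (hm : 0 < m) (v : Fin m → V)
    (hcyc : ∀ i : ℕ, ∀ h : i + 1 < m, G (v ⟨i, Nat.lt_of_succ_lt h⟩) (v ⟨i + 1, h⟩))
    (hclose : G (v ⟨m - 1, Nat.sub_one_lt_of_lt hm⟩) (v ⟨0, hm⟩)) (a : ℕ) :
    G (v ⟨a % m, Nat.mod_lt a hm⟩) (v ⟨(a + 1) % m, Nat.mod_lt _ hm⟩) := by
  have hlt := Nat.mod_lt a hm
  have hsucc : (a + 1) % m = (a % m + 1) % m := (Nat.mod_add_mod a m 1).symm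
  rcases (show a % m + 1 < m ∨ a % m + 1 = m by omega) with h | h
  · simpa only [hsucc, Nat.mod_eq_of_lt h] using hcyc (a % m) h
  · have hlast : a % m = m - 1 := by omega
    have hwrap : (a + 1) % m = 0 := by rw [hsucc, h, Nat.mod_self]
    simpa only [hlast, hwrap] using hclose

/-- **Odd cycle obstruction.** If a loopless digraph `G` contains a directed cycle of odd
length `m ≥ 3`, and `P` is a poset with fewer than `3` elements, then for every `k ≥ 1`
there is no `P`-coloring of the `k`-walks of `G`. -/
theorem odd_cycle_obstruction {V : Type*} (G : V → V → Prop)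
    (m : ℕ) (hm : 3 ≤ m) (hodd : Odd m) (v : Fin m → V)
    (hcyc : ∀ i : ℕ, ∀ h : i + 1 < m, G (v ⟨i, Nat.lt_of_succ_lt h⟩) (v ⟨i + 1, h⟩))
    (hclose : G (v ⟨m - 1, by omega⟩) (v ⟨0, by omega⟩))
    (P : Type*) [PartialOrder P] [Fintype P] (hP : Fintype.card P < 3)
    (k : ℕ) :
    ¬ ∃ c : Walks G k → P, IsPColoring G k c := by
  have hm0 : 0 < m := hodd.pos
  have hper : Periodic (fun j => v ⟨j % m, Nat.mod_lt j hm0⟩) m := fun j => by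
    simp only [Nat.add_mod_right]
  rintro ⟨c, hc⟩
  exact not_isPColoring_of_odd_periodic (by omega) (adj_mod_of_cycle hm0 v hcyc hclose) hper
    hodd k c hc
end

section
/- Proposition (walk-length bound for edge P-colorability): Let G be a loopless digraph, P a finite poset, and L a natural number such that every walk of G has length at most L (equivalently, G has no (L+2)-walk). If L + 1 ≤ |A(P)|, the number of lower sets of P, then the 2-walks (edges) of G admit a P-coloring. -/
/-- **Walk-length bound for edge `P`-colorability.** If every walk of a loopless digraph
`G` has length at most `L` (there is no `(L+2)`-walk) and `L + 1 ≤ |A(P)|`, the number of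
lower sets of the finite poset `P`, then the `2`-walks (edges) of `G` admit a
`P`-coloring. -/
theorem walk_length_bound_edge_colorable {V : Type*} (G : V → V → Prop) (hG : ∀ v, ¬ G v v)
    (P : Type*) [PartialOrder P] [Fintype P] (L : ℕ)
    (hL : ∀ w : Fin (L + 2) → V, ¬ IsWalk G w)
    (hcard : L + 1 ≤ Nat.card (LowerSet P)) :
    ∃ c : Walks G 2 → P, IsPColoring G 2 c := by
  classical
  -- `pred v k`: there is a walk with `k+1` vertices ending at `v`.
  set pred : V → ℕ → Prop := fun v k =>
    ∃ w : Fin (k + 1) → V, IsWalk G w ∧ w (Fin.last k) = v with hpreddef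
  have pred0 : ∀ v, pred v 0 := by
    intro v
    exact ⟨fun _ => v, fun i hi => absurd hi (by omega), rfl⟩
  have predle : ∀ v k, pred v k → k ≤ L := by
    rintro v k ⟨w, hw, -⟩
    by_contra hk
    exact hL (fun i => w ⟨i, by omega⟩) (fun i hi => hw i (by omega))
  set h : V → ℕ := fun v => Nat.findGreatest (pred v) L with hhdef
  have hspec : ∀ v, pred v (h v) := fun v =>
    Nat.findGreatest_spec (Nat.zero_le L) (pred0 v)
  have hle : ∀ v, h v ≤ L := fun v => Nat.findGreatest_le L
  have hedge : ∀ u v, G u v → h u < h v := by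
    intro u v huv
    obtain ⟨w, hw, hwu⟩ := hspec u
    have hpv : pred v (h u + 1) := by
      refine ⟨fun j => if hj : (j : ℕ) < h u + 1 then w ⟨j, hj⟩ else v, ?_, ?_⟩
      · intro i hi
        by_cases h1 : i + 1 < h u + 1
        · simp only [dif_pos (show i < h u + 1 by omega), dif_pos h1]
          exact hw i h1
        · have hik : i = h u := by omega
          simp only [dif_pos (show i < h u + 1 by omega),
            dif_neg (show ¬ i + 1 < h u + 1 by omega)]
          have hlast : w ⟨i, by omega⟩ = u := by
            have : (⟨i, by omega⟩ : Fin (h u + 1)) = Fin.last (h u) := by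
              ext; simpa using hik
            rw [this, hwu]
          rw [hlast]
          exact huv
      · simp only [Fin.last]
        rw [dif_neg (by omega)]
    have h1 : h u + 1 ≤ h v := Nat.le_findGreatest (predle v _ hpv) hpv
    omega
  -- enumeration of lower sets along a linear extension, in decreasing order
  haveI finLS : Finite (LowerSet P) :=
    Finite.of_injective (fun A : LowerSet P => (A : Set P)) SetLike.coe_injective
  haveI finLE : Finite (LinearExtension (LowerSet P)) := finLS
  haveI : Fintype (LinearExtension (LowerSet P)) :=
    Fintype.ofFinite (LinearExtension (LowerSet P))
  set N := Fintype.card (LinearExtension (LowerSet P)) with hNdef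
  have hNcard : L + 1 ≤ N := by
    have : Nat.card (LinearExtension (LowerSet P)) = N := Nat.card_eq_fintype_card
    have hnc : Nat.card (LinearExtension (LowerSet P)) = Nat.card (LowerSet P) := rfl
    omega
  set φ : Fin N ≃o LinearExtension (LowerSet P) := monoEquivOfFin _ rfl with hφdef
  set A : ℕ → LowerSet P :=
    fun n => (φ ⟨N - 1 - min n L, by omega⟩ : LinearExtension (LowerSet P)) with hAdef
  have hAnot : ∀ a b : ℕ, a < b → b ≤ L → ¬ A a ≤ A b := by
    intro a b hab hbL hle'
    have hidx : (⟨N - 1 - min b L, by omega⟩ : Fin N) < ⟨N - 1 - min a L, by omega⟩ := by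
      simp only [Fin.mk_lt_mk]
      omega
    have hmono : toLinearExtension (A a) ≤ toLinearExtension (A b) :=
      toLinearExtension.monotone hle'
    have : (φ ⟨N - 1 - min a L, by omega⟩ : LinearExtension (LowerSet P)) ≤
        φ ⟨N - 1 - min b L, by omega⟩ := hmono
    exact absurd (φ.le_iff_le.mp this) (not_le.mpr hidx)
  have hAne : ∀ a b : ℕ, a < b → b ≤ L → ∃ p : P, p ∈ A a ∧ p ∉ A b := by
    intro a b hab hbL
    by_contra hc
    push_neg at hc
    exact hAnot a b hab hbL (fun p hp => hc p hp)
  have key : ∀ e : Walks G 2, h (e.1 0) < h (e.1 1) := fun e =>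
    hedge _ _ (e.2 0 (by omega))
  choose f hf1 hf2 using fun e : Walks G 2 =>
    hAne (h (e.1 0)) (h (e.1 1)) (key e) (hle _)
  refine ⟨f, ?_⟩
  intro u hc
  set e1 : Walks G 2 := ⟨fun i => u.1 i.castSucc, u.2.walkPrefix⟩ with he1
  set e2 : Walks G 2 := ⟨fun i => u.1 i.succ, u.2.walkSuffix⟩ with he2
  have hmid : e1.1 1 = e2.1 0 := rfl
  have h1 : f e1 ∉ A (h (e1.1 1)) := hf2 e1
  have h2 : f e2 ∈ A (h (e2.1 0)) := hf1 e2
  rw [hmid] at h1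
  exact h1 ((A (h (e2.1 0))).lower hc h2)
end

section
/- Lower bound for the directed chromatic index: Let G be a loopless digraph on a finite vertex set V. If the edges (2-walks) of G can be colored by a set S of n elements so that for every 3-walk (v_1, v_2, v_3) the colors of the edges (v_1, v_2) and (v_2, v_3) differ, then the chromatic number of the undirected version of G is at most 2^n. -/
/-- The undirected version of a digraph `G`: `u` and `v` are adjacent iff `u ≠ v` and at
least one of the directed edges `u → v`, `v → u` is present. -/
def undirected {V : Type*} (G : V → V → Prop) : SimpleGraph V where
  Adj u v := u ≠ v ∧ (G u v ∨ G v u)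
  symm := ⟨fun _ _ h => ⟨h.1.symm, h.2.symm⟩⟩
  loopless := ⟨fun _ h => h.1 rfl⟩

/-!
Colour each vertex by the set of colours of its outgoing arcs. Along an arc `u → v` the colour
of `u → v` lies in the set of `u` but not in that of `v`, since it would otherwise equal the colour
of some arc `v → w`, contradicting the hypothesis on the 3-walk `(u, v, w)`. This is a proper
colouring of the undirected graph by subsets of `S`, of which there are `2 ^ n`.
-/

section OutColors

variable {V S : Type*} {G : V → V → Prop}

theorem isWalk_three {u v w : V} (huv : G u v) (hvw : G v w) : IsWalk G ![u, v, w] := by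
  rintro (_ | _ | i) hi
  · exact huv
  · exact hvw
  · omega

def outColors (d : {e : V × V // G e.1 e.2} → S) (v : V) : Set S :=
  {s | ∃ w, ∃ hvw : G v w, d ⟨(v, w), hvw⟩ = s}

def IsArcColoring (d : {e : V × V // G e.1 e.2} → S) : Prop :=
  ∀ ⦃u v w : V⦄ (huv : G u v) (hvw : G v w), d ⟨(u, v), huv⟩ ≠ d ⟨(v, w), hvw⟩

variable {d : {e : V × V // G e.1 e.2} → S}

theorem outColors_ne_of_rel (hd : IsArcColoring d) {u v : V} (huv : G u v) :
    outColors d u ≠ outColors d v := by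
  intro heq
  have hmem : d ⟨(u, v), huv⟩ ∈ outColors d v := heq ▸ ⟨v, huv, rfl⟩
  obtain ⟨w, hvw, hdw⟩ := hmem
  exact hd huv hvw hdw.symm

def outColorsColoring (hd : IsArcColoring d) : (undirected G).Coloring (Set S) :=
  SimpleGraph.Coloring.mk (outColors d) fun huv =>
    huv.2.elim (outColors_ne_of_rel hd) fun hvu => (outColors_ne_of_rel hd hvu).symm

theorem chromaticNumber_undirected_le_two_pow [Fintype S] (hd : IsArcColoring d) :
    (undirected G).chromaticNumber ≤ ((2 ^ Fintype.card S : ℕ) : ℕ∞) :=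
  Fintype.card_set (α := S) ▸ (outColorsColoring hd).colorable.chromaticNumber_le

end OutColors

/-- **Lower bound for the directed chromatic index.** If the edges (2-walks) of a
loopless digraph `G` on a finite vertex set can be colored by a set `S` of `n` elements
so that for every 3-walk `(v₁, v₂, v₃)` the colors of the edges `(v₁, v₂)` and `(v₂, v₃)`
differ, then the chromatic number of the undirected version of `G` is at most `2 ^ n`. -/
theorem directed_chromatic_index_lower_bound {V : Type*}
    (G : V → V → Prop)
    (S : Type*) [Fintype S] (n : ℕ) (hS : Fintype.card S = n)
    (h : ∃ d : {e : V × V // G e.1 e.2} → S,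
      ∀ w : Fin 3 → V, ∀ hw : IsWalk G w,
        d ⟨(w ⟨0, by omega⟩, w ⟨1, by omega⟩), hw 0 (by omega)⟩ ≠
        d ⟨(w ⟨1, by omega⟩, w ⟨2, by omega⟩), hw 1 (by omega)⟩) :
    (undirected G).chromaticNumber ≤ ((2 ^ n : ℕ) : ℕ∞) := by
  obtain ⟨d, hd⟩ := h
  subst hS
  exact chromaticNumber_undirected_le_two_pow fun _ _ _ huv hvw =>
    hd _ (isWalk_three huv hvw)
end

section
/- Generalized lower bound for P-colorings of edges: Let G be a loopless digraph on a finite vertex set V and P a finite poset. If the 2-walks (edges) of G admit a P-coloring, then the chromatic number of the undirected version of G is at most |A(P)|, the number of lower sets of P. -/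
/-!
Colour a vertex `v` by the lower set of colours that lie above no colour of an edge entering `v`.
For an edge `a → b`, its colour lies outside the set of `b` (it is above itself), but inside the
set of `a`: for any edge `w → a`, the 3-walk `w a b` forbids `c (w a) ≤ c (a b)`. Hence the
endpoints of every edge receive different lower sets.
-/

section

variable {V P : Type*} {G : V → V → Prop}

def Walks.edge {a b : V} (hab : G a b) : Walks G 2 :=
  ⟨![a, b], fun i h => by
    obtain rfl : i = 0 := by omega
    simpa using hab⟩

variable [Preorder P] {c : Walks G 2 → P}

theorem IsPColoring.not_le_of_consecutive (hc : IsPColoring G 2 c) {a b d : V} (hab : G a b)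
    (hbd : G b d) : ¬ c (Walks.edge hab) ≤ c (Walks.edge hbd) := by
  have hwalk : IsWalk G ![a, b, d] := fun i h => by
    rcases (by omega : i = 0 ∨ i = 1) with rfl | rfl
    · simpa using hab
    · simpa using hbd
  convert hc ⟨_, hwalk⟩ using 3 <;>
  · refine congrArg c (Subtype.ext (funext fun i => ?_))
    fin_cases i <;> rfl

def colorsAvoidingInEdges (c : Walks G 2 → P) (v : V) : LowerSet P :=
  (upperClosure {x | ∃ w, ∃ hw : G w v, c (Walks.edge hw) = x}).compl

theorem mem_colorsAvoidingInEdges {v : V} {x : P} :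
    x ∈ colorsAvoidingInEdges c v ↔ ∀ w, ∀ hw : G w v, ¬ c (Walks.edge hw) ≤ x := by
  simp [colorsAvoidingInEdges, mem_upperClosure]

theorem IsPColoring.colorsAvoidingInEdges_ne (hc : IsPColoring G 2 c) {a b : V} (hab : G a b) :
    colorsAvoidingInEdges c a ≠ colorsAvoidingInEdges c b := by
  intro heq
  have h_mem_a : c (Walks.edge hab) ∈ colorsAvoidingInEdges c a :=
    mem_colorsAvoidingInEdges.2 fun _ hwa => hc.not_le_of_consecutive hwa hab
  have h_not_mem_b : c (Walks.edge hab) ∉ colorsAvoidingInEdges c b :=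
    fun h => mem_colorsAvoidingInEdges.1 h a hab le_rfl
  exact h_not_mem_b (heq ▸ h_mem_a)

def IsPColoring.lowerSetColoring (hc : IsPColoring G 2 c) :
    (undirected G).Coloring (LowerSet P) :=
  SimpleGraph.Coloring.mk (colorsAvoidingInEdges c) fun {_ _} huv => by
    rcases huv with ⟨-, hab | hba⟩
    · exact hc.colorsAvoidingInEdges_ne hab
    · exact (hc.colorsAvoidingInEdges_ne hba).symm

theorem IsPColoring.chromaticNumber_undirected_le [Finite P] (hc : IsPColoring G 2 c) :
    (undirected G).chromaticNumber ≤ (Nat.card (LowerSet P) : ℕ∞) := by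
  have := Fintype.ofFinite (LowerSet P)
  simpa [Nat.card_eq_fintype_card] using hc.lowerSetColoring.colorable.chromaticNumber_le

end

theorem generalized_lower_bound_edge_coloring_general {V : Type*}
    (G : V → V → Prop)
    (P : Type*) [PartialOrder P] [Fintype P]
    (h : ∃ c : Walks G 2 → P, IsPColoring G 2 c) :
    (undirected G).chromaticNumber ≤ (Nat.card (LowerSet P) : ℕ∞) := by
  obtain ⟨c, hc⟩ := h
  exact hc.chromaticNumber_undirected_le

/-- **Generalized lower bound for `P`-colorings of edges.** If the 2-walks (edges) of a
loopless digraph `G` on a finite vertex set admit a `P`-coloring for a finite poset `P`,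
then the chromatic number of the undirected version of `G` is at most `|A(P)|`, the
number of lower sets of `P`. -/
theorem generalized_lower_bound_edge_coloring {V : Type*} [Fintype V]
    (G : V → V → Prop) (hG : ∀ v, ¬ G v v)
    (P : Type*) [PartialOrder P] [Fintype P]
    (h : ∃ c : Walks G 2 → P, IsPColoring G 2 c) :
    (undirected G).chromaticNumber ≤ (Nat.card (LowerSet P) : ℕ∞) :=
  generalized_lower_bound_edge_coloring_general G P h
end

section
/- Upper bound for the directed chromatic index: Let G be a loopless digraph and k a natural number, and suppose every walk of G has length at most 2^k - 1 (equivalently, G has no (2^k + 1)-walk). Then the edges (2-walks) of G can be colored by a set of k elements so that for every 3-walk (v_1, v_2, v_3) the colors of the edges (v_1, v_2) and (v_2, v_3) differ. -/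


lemma msb_bits {a b : ℕ} (hab : a < b) :
    a.testBit (Nat.log 2 (a ^^^ b)) = false ∧ b.testBit (Nat.log 2 (a ^^^ b)) = true := by
  set x := a ^^^ b with hx
  have hx0 : x ≠ 0 := by
    simp only [hx, ne_eq, Nat.xor_eq_zero_iff]
    omega
  set i := Nat.log 2 x with hi
  have hxi : x.testBit i = true := by
    have h1 : 2 ^ i ≤ x := Nat.pow_log_le_self 2 hx0
    have h2 : x < 2 ^ (i + 1) := Nat.lt_pow_succ_log_self one_lt_two x
    have hdiv : x / 2 ^ i = 1 :=
      Nat.div_eq_of_lt_le (by simpa using h1) (by rw [pow_succ] at h2; omega)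
    simp [Nat.testBit_eq_decide_div_mod_eq, hdiv]
  have hhigh : ∀ j, i < j → a.testBit j = b.testBit j := by
    intro j hj
    have h2 : x < 2 ^ j := lt_of_lt_of_le (Nat.lt_pow_succ_log_self one_lt_two x)
      (Nat.pow_le_pow_right (by norm_num) hj)
    have := Nat.testBit_lt_two_pow h2
    rw [hx, Nat.testBit_xor] at this
    rcases Bool.eq_false_or_eq_true (a.testBit j) <;>
      rcases Bool.eq_false_or_eq_true (b.testBit j) <;> simp_all
  have hne : a.testBit i ≠ b.testBit i := by
    intro h
    rw [hx, Nat.testBit_xor, h] at hxi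
    simp at hxi
  rcases Bool.eq_false_or_eq_true (a.testBit i) with h | h
  · exfalso
    rcases Bool.eq_false_or_eq_true (b.testBit i) with h' | h'
    · exact hne (h.trans h'.symm)
    · exact absurd hab (not_lt.2 (le_of_lt (Nat.lt_of_testBit i h' h
        (fun j hj => (hhigh j hj).symm))))
  · refine ⟨h, ?_⟩
    rcases Bool.eq_false_or_eq_true (b.testBit i) with h' | h'
    · exact h'
    · exact absurd (h.trans h'.symm) hne

/-- **Upper bound for the directed chromatic index.** If every walk of a loopless digraph
`G` has length at most `2 ^ k - 1` (there is no `(2 ^ k + 1)`-walk), then the edges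
(2-walks) of `G` can be colored by a set of `k` elements so that for every 3-walk
`(v₁, v₂, v₃)` the colors of the edges `(v₁, v₂)` and `(v₂, v₃)` differ. -/
theorem directed_chromatic_index_upper_bound {V : Type*}
    (G : V → V → Prop) (hG : ∀ v, ¬ G v v) (k : ℕ)
    (hlen : ∀ w : Fin (2 ^ k + 1) → V, ¬ IsWalk G w) :
    ∃ d : {e : V × V // G e.1 e.2} → Fin k,
      ∀ w : Fin 3 → V, ∀ hw : IsWalk G w,
        d ⟨(w ⟨0, by omega⟩, w ⟨1, by omega⟩), hw 0 (by omega)⟩ ≠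
        d ⟨(w ⟨1, by omega⟩, w ⟨2, by omega⟩), hw 1 (by omega)⟩ := by
  classical
  set S : V → Set ℕ := fun v => {n | ∃ w : Fin (n + 1) → V, IsWalk G w ∧ w (Fin.last n) = v}
    with hS
  have hne : ∀ v, (S v).Nonempty :=
    fun v => ⟨0, fun _ => v, fun i h => absurd h (by omega), rfl⟩
  have hmem : ∀ v n, n ∈ S v → n < 2 ^ k := by
    intro v n hn
    by_contra hlt
    push_neg at hlt
    obtain ⟨w, hw, -⟩ := hn
    exact hlen (fun i => w ⟨i.1, by omega⟩) (fun i h => hw i (by omega))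
  have hbdd : ∀ v, BddAbove (S v) := fun v => ⟨2 ^ k, fun n hn => le_of_lt (hmem v n hn)⟩
  set f : V → ℕ := fun v => sSup (S v) with hf
  have hflt : ∀ v, f v < 2 ^ k := fun v => hmem v _ (Nat.sSup_mem (hne v) (hbdd v))
  have hstep : ∀ u v, G u v → f u < f v := by
    intro u v huv
    obtain ⟨w, hw, hwu⟩ : f u ∈ S u := Nat.sSup_mem (hne u) (hbdd u)
    have hmemv : f u + 1 ∈ S v := by
      refine ⟨fun i => if h : i.1 < f u + 1 then w ⟨i.1, h⟩ else v, ?_, ?_⟩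
      · intro i h
        by_cases h1 : i + 1 < f u + 1
        · simp only [dif_pos h1, dif_pos (by omega : i < f u + 1)]
          exact hw i h1
        · have hi : i = f u := by omega
          simp only [dif_pos (by omega : i < f u + 1), dif_neg h1]
          have hlast : (⟨i, by omega⟩ : Fin (f u + 1)) = Fin.last (f u) := by
            ext; simp [Fin.last, hi]
          rw [hlast, hwu]; exact huv
      · simp [Fin.last]
    have h1 := le_csSup (hbdd v) hmemv
    have h2 : f v = sSup (S v) := rfl
    omega
  refine ⟨fun e => ⟨Nat.log 2 (f e.1.1 ^^^ f e.1.2), ?_⟩, ?_⟩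
  · have hlt := hstep e.1.1 e.1.2 e.2
    exact Nat.log_lt_of_lt_pow (by simp only [ne_eq, Nat.xor_eq_zero_iff]; omega)
      (Nat.xor_lt_two_pow (hflt _) (hflt _))
  · intro w hw hcontra
    have h01 : f (w ⟨0, by omega⟩) < f (w ⟨1, by omega⟩) := hstep _ _ (hw 0 (by omega))
    have h12 : f (w ⟨1, by omega⟩) < f (w ⟨2, by omega⟩) := hstep _ _ (hw 1 (by omega))
    have hb1 := (msb_bits h01).2
    have hb2 := (msb_bits h12).1
    have heq : Nat.log 2 (f (w ⟨0, by omega⟩) ^^^ f (w ⟨1, by omega⟩)) =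
        Nat.log 2 (f (w ⟨1, by omega⟩) ^^^ f (w ⟨2, by omega⟩)) := congrArg Fin.val hcontra
    rw [heq, hb2] at hb1
    exact Bool.false_ne_true hb1
end

section
/- Edge P-colorability of the doubly directed version: Let G₀ be a simple graph on a finite vertex set V, and let G₂ be its doubly directed version, the digraph with G₂ u v iff u and v are adjacent in G₀. Let P be a finite poset. Then the 2-walks (edges) of G₂ admit a P-coloring if and only if the chromatic number of G₀ is at most the maximum size of an antichain in A(P), the poset of lower sets of P ordered by inclusion. -/
/-- The width (Dilworth number) of a poset `Q`: the maximum size of an antichain. -/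
noncomputable def posetWidth (Q : Type*) [Preorder Q] : ℕ :=
  sSup {n : ℕ | ∃ s : Finset Q, IsAntichain (· ≤ ·) (s : Set Q) ∧ s.card = n}

/-!
An edge coloring `c` yields the vertex labelling `v ↦ lowerClosure {c (v, w) | w}` in `A(P)`, and
conversely a labelling `f : V → A(P)` yields the edge coloring `c (v, w) ∈ f v \ f w`; the
coloring condition on the walks `u v w` amounts to `f u ⊄ f v` for every edge `u v`. For the doubly directed
graph this makes adjacent vertices carry incomparable labels, i.e. `G₀` maps homomorphically into
the incomparability graph of `A(P)`. By Dilworth's theorem that graph is colorable with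
`width A(P)` colors, and conversely a coloring with that many colors maps injectively onto a
maximum antichain.
-/

open Finset

def incompGraph (Q : Type*) [Preorder Q] : SimpleGraph Q where
  Adj := IncompRel (· ≤ ·)
  symm := inferInstance
  loopless := ⟨fun _ h => h.not_le le_rfl⟩

section Width

variable {Q : Type*} [Preorder Q] [Finite Q]

lemma bddAbove_card_antichains :
    BddAbove {n : ℕ | ∃ s : Finset Q, IsAntichain (· ≤ ·) (s : Set Q) ∧ s.card = n} := by
  have := Fintype.ofFinite Q
  exact ⟨Fintype.card Q, by rintro _ ⟨s, -, rfl⟩; exact card_le_univ s⟩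

lemma card_le_posetWidth {s : Finset Q} (hs : IsAntichain (· ≤ ·) (s : Set Q)) :
    s.card ≤ posetWidth Q :=
  le_csSup bddAbove_card_antichains ⟨s, hs, rfl⟩

lemma exists_antichain_card_eq_posetWidth :
    ∃ s : Finset Q, IsAntichain (· ≤ ·) (s : Set Q) ∧ s.card = posetWidth Q := by
  refine Nat.sSup_mem ?_ bddAbove_card_antichains
  exact ⟨0, ∅, by simp, rfl⟩

end Width

section Dilworth

variable {Q : Type*} [PartialOrder Q]

lemma Set.Finite.exists_isGreatest_of_isChain {t : Set Q} (hfin : t.Finite)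
    (ht : IsChain (· ≤ ·) t) (hne : t.Nonempty) : ∃ g, IsGreatest t g := by
  obtain ⟨g, hg⟩ := hfin.exists_maximal hne
  exact ⟨g, hg.1, fun y hy => (ht.total hg.1 hy).elim (hg.2 hy) id⟩

def IsChainPartition (s : Finset Q) (d : ℕ) (col : Q → ℕ) : Prop :=
  (∀ x ∈ s, col x < d) ∧ ∀ x ∈ s, ∀ y ∈ s, col x = col y → x ≤ y ∨ y ≤ x

def antichainSupport (s : Finset Q) (d : ℕ) : Set Q :=
  {x | ∃ B ⊆ s, IsAntichain (· ≤ ·) (B : Set Q) ∧ B.card = d ∧ x ∈ B}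

lemma antichainSupport_subset (s : Finset Q) (d : ℕ) : antichainSupport s d ⊆ s :=
  fun _ ⟨_, hBs, _, _, hxB⟩ => hBs hxB

namespace IsChainPartition

variable {s B : Finset Q} {d i : ℕ} {col : Q → ℕ}

lemma isChain (hcol : IsChainPartition s d col) {t : Set Q} (hts : t ⊆ s)
    (hti : ∀ x ∈ t, col x = i) : IsChain (· ≤ ·) t := fun x hx y hy _ =>
  hcol.2 x (hts hx) y (hts hy) ((hti x hx).trans (hti y hy).symm)

lemma extend [DecidableEq Q] {K : Finset Q} (hcol : IsChainPartition (s \ K) d col)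
    (hK : IsChain (· ≤ ·) (K : Set Q)) :
    IsChainPartition s (d + 1) (fun x => if x ∈ K then d else col x) := by
  have hmem {x} (hx : x ∈ s) (hxK : x ∉ K) : x ∈ s \ K := mem_sdiff.2 ⟨hx, hxK⟩
  refine ⟨fun x hx => ?_, fun x hx y hy hxy => ?_⟩
  · beta_reduce
    split_ifs with hxK
    · exact d.lt_succ_self
    · exact (hcol.1 x (hmem hx hxK)).trans d.lt_succ_self
  · by_cases hxK : x ∈ K <;> by_cases hyK : y ∈ K <;>
      simp only [hxK, hyK, if_true, if_false] at hxy
    · exact hK.total hxK hyK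
    · exact absurd hxy (hcol.1 y (hmem hy hyK)).ne'
    · exact absurd hxy (hcol.1 x (hmem hx hxK)).ne
    · exact hcol.2 x (hmem hx hxK) y (hmem hy hyK) hxy

lemma exists_mem_col_eq (hcol : IsChainPartition s d col) (hBs : B ⊆ s)
    (hB : IsAntichain (· ≤ ·) (B : Set Q)) (hBd : B.card = d) (hi : i < d) :
    ∃ x ∈ B, col x = i := by
  have hinj : Set.InjOn col B := fun x hx y hy hxy =>
    (hcol.2 x (hBs hx) y (hBs hy) hxy).elim (hB.eq hx hy) fun h => (hB.eq hy hx h).symm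
  exact surjOn_of_injOn_of_card_le col (fun x hx => mem_range.2 (hcol.1 x (hBs hx))) hinj
    (by simp [hBd]) (mem_range.2 hi)

lemma exists_isGreatest_antichainSupport (hcol : IsChainPartition s d col)
    (hB : ∃ B ⊆ s, IsAntichain (· ≤ ·) (B : Set Q) ∧ B.card = d) (hi : i < d) :
    ∃ g, IsGreatest {x ∈ antichainSupport s d | col x = i} g := by
  obtain ⟨B, hBs, hB, hBd⟩ := hB
  obtain ⟨x, hx, hxi⟩ := hcol.exists_mem_col_eq hBs hB hBd hi
  have hts : {x ∈ antichainSupport s d | col x = i} ⊆ s :=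
    fun _ hy => antichainSupport_subset s d hy.1
  exact (s.finite_toSet.subset hts).exists_isGreatest_of_isChain
    (hcol.isChain hts fun _ hy => hy.2) ⟨x, ⟨B, hBs, hB, hBd, hx⟩, hxi⟩

/-- A maximum antichain through `gj` also meets chain `i`, below `gi`. -/
lemma eq_of_isGreatest_le (hcol : IsChainPartition s d col) {j : ℕ} {gi gj : Q} (hi : i < d)
    (hgi : IsGreatest {x ∈ antichainSupport s d | col x = i} gi)
    (hgj : IsGreatest {x ∈ antichainSupport s d | col x = j} gj) (hle : gi ≤ gj) : i = j := by
  obtain ⟨⟨B, hBs, hB, hBd, hgB⟩, hgj⟩ := hgj.1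
  obtain ⟨x, hxB, hxi⟩ := hcol.exists_mem_col_eq hBs hB hBd hi
  have hxg : x ≤ gj := (hgi.2 ⟨⟨B, hBs, hB, hBd, hxB⟩, hxi⟩).trans hle
  rw [← hxi, hB.eq hxB hgB hxg, hgj]

lemma exists_isGreatest_antichainSupport_le [DecidableEq Q] (hcol : IsChainPartition s d col)
    (hB : ∃ B ⊆ s, IsAntichain (· ≤ ·) (B : Set Q) ∧ B.card = d) {a : Q} (ha : a ∉ s)
    (hamax : ∀ x ∈ s, ¬ a < x)
    (hwidth : ∀ t ⊆ insert a s, IsAntichain (· ≤ ·) (t : Set Q) → t.card ≤ d) :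
    ∃ i < d, ∃ g, IsGreatest {x ∈ antichainSupport s d | col x = i} g ∧ g ≤ a := by
  have : Nonempty Q := ⟨a⟩
  choose! g hg using fun i (hi : i < d) => hcol.exists_isGreatest_antichainSupport hB hi
  have hgs : ∀ i < d, g i ∈ s := fun i hi => antichainSupport_subset s d (hg i hi).1.1
  have hg_le : ∀ i ∈ range d, ∀ j ∈ range d, g i ≤ g j → i = j := fun i hi j hj =>
    hcol.eq_of_isGreatest_le (mem_range.1 hi) (hg i (mem_range.1 hi)) (hg j (mem_range.1 hj))
  have hg_inj : Set.InjOn g (range d) := fun i hi j hj hij => hg_le i hi j hj hij.le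
  by_contra! hna
  have hanti : IsAntichain (· ≤ ·) ((insert a ((range d).image g) : Finset Q) : Set Q) := by
    rw [coe_insert, coe_image]
    refine IsAntichain.insert ?_ ?_ ?_
    · rintro _ ⟨i, hi, rfl⟩ _ ⟨j, hj, rfl⟩ hne hij
      exact hne (congrArg g (hg_le i hi j hj hij))
    · rintro _ ⟨i, hi, rfl⟩ -
      exact hna i (mem_range.1 hi) _ (hg i (mem_range.1 hi))
    · rintro _ ⟨i, hi, rfl⟩ hne hai
      exact hamax _ (hgs i (mem_range.1 hi)) (lt_of_le_of_ne hai hne)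
  have hsub : insert a ((range d).image g) ⊆ insert a s :=
    insert_subset_insert a fun _ hx =>
      have ⟨i, hi, hx⟩ := mem_image.1 hx
      hx ▸ hgs i (mem_range.1 hi)
  have hcard := hwidth _ hsub hanti
  rw [card_insert_of_notMem fun h => ?_, card_image_of_injOn hg_inj, card_range] at hcard
  · omega
  · obtain ⟨j, hj, rfl⟩ := mem_image.1 h
    exact ha (hgs j (mem_range.1 hj))

/-- The inductive step of Galvin's proof of Dilworth's theorem. `K` is a chain of `col` cut off
at its top within `antichainSupport s d` and extended by `a`. -/
lemma exists_chain_meeting_antichains [DecidableEq Q] (hcol : IsChainPartition s d col) {a : Q}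
    (ha : a ∉ s) (hamax : ∀ x ∈ s, ¬ a < x)
    (hwidth : ∀ t ⊆ insert a s, IsAntichain (· ≤ ·) (t : Set Q) → t.card ≤ d) :
    ∃ K : Finset Q, a ∈ K ∧ IsChain (· ≤ ·) (K : Set Q) ∧
      ∀ B ⊆ s, IsAntichain (· ≤ ·) (B : Set Q) → B.card = d → ∃ x ∈ B, x ∈ K := by
  classical
  by_cases hB₀ : ∃ B ⊆ s, IsAntichain (· ≤ ·) (B : Set Q) ∧ B.card = d
  swap
  · exact ⟨{a}, mem_singleton_self a, by simp, fun B hBs hB hBd =>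
      (hB₀ ⟨B, hBs, hB, hBd⟩).elim⟩
  obtain ⟨i, hi, g, hg, hga⟩ := hcol.exists_isGreatest_antichainSupport_le hB₀ ha hamax hwidth
  refine ⟨insert a {x ∈ s | col x = i ∧ x ≤ g}, mem_insert_self _ _, ?_, ?_⟩
  · rw [coe_insert]
    refine (hcol.isChain (filter_subset _ _) fun x hx => (mem_filter.1 hx).2.1).insert ?_
    exact fun x hx _ => .inr ((mem_filter.1 hx).2.2.trans hga)
  · intro B hBs hB hBd
    obtain ⟨x, hxB, hxi⟩ := hcol.exists_mem_col_eq hBs hB hBd hi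
    exact ⟨x, hxB, mem_insert_of_mem (mem_filter.2
      ⟨hBs hxB, hxi, hg.2 ⟨⟨B, hBs, hB, hBd, hxB⟩, hxi⟩⟩)⟩

end IsChainPartition

/-- Dilworth's theorem, by Galvin's induction. -/
theorem exists_isChainPartition (s : Finset Q) (d : ℕ)
    (hs : ∀ t ⊆ s, IsAntichain (· ≤ ·) (t : Set Q) → t.card ≤ d) :
    ∃ col, IsChainPartition s d col := by
  classical
  induction s using Finset.strongInduction generalizing d with
  | H s ih =>
  rcases s.eq_empty_or_nonempty with rfl | hne
  · exact ⟨fun _ => 0, by simp [IsChainPartition]⟩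
  obtain ⟨a, hamax⟩ := s.exists_maximal hne
  have has : a ∈ s := hamax.1
  have hd : 1 ≤ d := by simpa using hs {a} (singleton_subset_iff.2 has) (by simp)
  obtain ⟨n, rfl⟩ := Nat.exists_eq_add_of_le' hd
  obtain ⟨col, hcol⟩ := ih (s.erase a) (erase_ssubset has) (n + 1) fun t ht =>
    hs t (ht.trans (erase_subset a s))
  obtain ⟨K, haK, hK, hKmeet⟩ := hcol.exists_chain_meeting_antichains (notMem_erase a s)
    (fun x hx => hamax.not_gt (mem_of_mem_erase hx)) (by rwa [insert_erase has])
  have hsK : s \ K ⊆ s.erase a := fun x hx =>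
    mem_erase.2 ⟨fun h => (mem_sdiff.1 hx).2 (h ▸ haK), (mem_sdiff.1 hx).1⟩
  obtain ⟨col', hcol'⟩ := ih (s \ K) (hsK.trans_ssubset (erase_ssubset has)) n
    fun t ht htanti => by
      by_contra! hlt
      obtain ⟨x, hxt, hxK⟩ := hKmeet t (ht.trans hsK) htanti
        (le_antisymm (hs t (ht.trans (hsK.trans (erase_subset a s))) htanti) hlt)
      exact (mem_sdiff.1 (ht hxt)).2 hxK
  exact ⟨_, hcol'.extend hK⟩

theorem incompGraph_colorable [Finite Q] : (incompGraph Q).Colorable (posetWidth Q) := by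
  have := Fintype.ofFinite Q
  obtain ⟨col, hcol⟩ := exists_isChainPartition (univ : Finset Q) (posetWidth Q)
    fun t _ ht => card_le_posetWidth ht
  refine ⟨.mk (fun x => ⟨col x, hcol.1 x (mem_univ x)⟩) fun {x y} hxy heq => ?_⟩
  exact (hcol.2 x (mem_univ x) y (mem_univ y) (Fin.mk.inj_iff.1 heq)).elim hxy.1 hxy.2

end Dilworth

theorem chromaticNumber_le_posetWidth_iff {V Q : Type*} [PartialOrder Q] [Finite Q]
    (G : SimpleGraph V) :
    G.chromaticNumber ≤ posetWidth Q ↔ Nonempty (G →g incompGraph Q) := by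
  refine ⟨fun h => ?_, fun ⟨f⟩ =>
    (SimpleGraph.chromaticNumber_mono_of_hom f).trans incompGraph_colorable.chromaticNumber_le⟩
  obtain ⟨s, hs, hcard⟩ := exists_antichain_card_eq_posetWidth (Q := Q)
  obtain ⟨C⟩ := SimpleGraph.chromaticNumber_le_iff_colorable.1 h
  let e : Fin (posetWidth Q) ≃ s := (s.equivFin.trans (finCongr hcard)).symm
  refine ⟨⟨fun v => e (C v), fun {v w} hvw => ?_⟩⟩
  have hne : (e (C v) : Q) ≠ e (C w) := fun h => C.valid hvw (e.injective (Subtype.ext h))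
  exact ⟨hs (e (C v)).2 (e (C w)).2 hne, hs (e (C w)).2 (e (C v)).2 hne.symm⟩

section EdgeColorings

variable {V : Type*} {G : V → V → Prop}

def edgeWalk {x y : V} (h : G x y) : Walks G 2 :=
  ⟨![x, y], fun i hi => by obtain rfl : i = 0 := (by omega); exact h⟩

lemma Walks.eq_edgeWalk (w : Walks G 2) : w = edgeWalk (w.2 0 one_lt_two) :=
  Subtype.ext <| funext fun i => by fin_cases i <;> rfl

lemma isPColoring_two_iff {P : Type*} [Preorder P] {c : Walks G 2 → P} :
    IsPColoring G 2 c ↔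
      ∀ ⦃x y z : V⦄ (hxy : G x y) (hyz : G y z),
        ¬ c (edgeWalk hxy) ≤ c (edgeWalk hyz) := by
  refine ⟨fun hc x y z hxy hyz => ?_, fun hc u => ?_⟩
  · have hwalk : IsWalk G ![x, y, z] := fun i hi => by
      obtain rfl | rfl : i = 0 ∨ i = 1 := by omega
      exacts [hxy, hyz]
    have := hc ⟨![x, y, z], hwalk⟩
    rwa [Walks.eq_edgeWalk ⟨fun i => _, _⟩, Walks.eq_edgeWalk ⟨fun i => _, _⟩] at this
  · rw [Walks.eq_edgeWalk ⟨fun i => u.1 i.castSucc, _⟩,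
      Walks.eq_edgeWalk ⟨fun i => u.1 i.succ, _⟩]
    exact hc _ _

theorem exists_isPColoring_two_iff (G : V → V → Prop) (P : Type*) [Preorder P] :
    (∃ c : Walks G 2 → P, IsPColoring G 2 c) ↔
      ∃ f : V → LowerSet P, ∀ ⦃x y⦄, G x y → ¬ f x ≤ f y := by
  simp only [isPColoring_two_iff]
  constructor
  · rintro ⟨c, hc⟩
    refine ⟨fun x => lowerClosure {p | ∃ y, ∃ h : G x y, c (edgeWalk h) = p},
      fun x y hxy hle => ?_⟩
    obtain ⟨_, ⟨z, hyz, rfl⟩, hle'⟩ :=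
      mem_lowerClosure.1 (hle (subset_lowerClosure ⟨y, hxy, rfl⟩))
    exact hc hxy hyz hle'
  · rintro ⟨f, hf⟩
    have hsep (w : Walks G 2) : ∃ p, p ∈ f (w.1 0) ∧ p ∉ f (w.1 1) :=
      Set.not_subset.1 (mt LowerSet.coe_subset_coe.1 (hf (w.2 0 one_lt_two)))
    choose c hc₀ hc₁ using hsep
    exact ⟨c, fun x y z hxy hyz hle =>
      hc₁ (edgeWalk hxy) ((f y).lower hle (hc₀ (edgeWalk hyz)))⟩

end EdgeColorings

theorem doubly_directed_edge_coloring_general {V : Type*} (G₀ : SimpleGraph V)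
    (P : Type*) [PartialOrder P] [Fintype P] :
    (∃ c : Walks (fun u v : V => G₀.Adj u v) 2 → P,
        IsPColoring (fun u v : V => G₀.Adj u v) 2 c) ↔
      G₀.chromaticNumber ≤ (posetWidth (LowerSet P) : ℕ∞) := by
  have : Finite (LowerSet P) := Finite.of_injective _ SetLike.coe_injective
  rw [exists_isPColoring_two_iff, chromaticNumber_le_posetWidth_iff]
  constructor
  · rintro ⟨f, hf⟩
    exact ⟨⟨f, fun h => ⟨hf h, hf h.symm⟩⟩⟩
  · rintro ⟨f⟩
    exact ⟨f, fun _ _ h => (f.map_rel h).not_le⟩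

/-- **Edge `P`-colorability of the doubly directed version.** Let `G₂` be the doubly
directed version of a simple graph `G₀` on a finite vertex set (`G₂ u v` iff `u, v` are
adjacent in `G₀`) and let `P` be a finite poset.  The 2-walks (edges) of `G₂` admit a
`P`-coloring iff the chromatic number of `G₀` is at most the maximum size of an antichain
in `A(P)`, the poset of lower sets of `P` ordered by inclusion. -/
theorem doubly_directed_edge_coloring {V : Type*} [Fintype V] (G₀ : SimpleGraph V)
    (P : Type*) [PartialOrder P] [Fintype P] :
    (∃ c : Walks (fun u v : V => G₀.Adj u v) 2 → P,
        IsPColoring (fun u v : V => G₀.Adj u v) 2 c) ↔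
      G₀.chromaticNumber ≤ (posetWidth (LowerSet P) : ℕ∞) :=
  doubly_directed_edge_coloring_general G₀ P
end

section
/- Diamond poset coloring characterizes bipartiteness of the interior: Let G be a loopless digraph on a finite vertex set V and let P be the diamond poset {0, a, b, 1} with 0 < a < 1, 0 < b < 1, and a, b incomparable. Then the vertices (1-walks) of G admit a P-coloring if and only if the undirected version of the induced subdigraph of G on the vertices that are neither sources nor sinks of G is bipartite. -/
namespace DiamondColoring

section PosetColoring

variable {V P : Type*} [PartialOrder P]

def IsPosetColoring (G : V → V → Prop) (c : V → P) : Prop :=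
  ∀ u v, G u v → ¬ c u ≤ c v

variable {G : V → V → Prop} {c : V → P} {u v : V}

theorem IsPosetColoring.ne_bot_of_adj [OrderBot P] (hc : IsPosetColoring G c) (h : G u v) :
    c u ≠ ⊥ :=
  fun hu => hc u v h (hu ▸ bot_le)

theorem IsPosetColoring.ne_top_of_adj [OrderTop P] (hc : IsPosetColoring G c) (h : G u v) :
    c v ≠ ⊤ :=
  fun hv => hc u v h (hv ▸ le_top)

end PosetColoring

def mid (b : Bool) : Bool × Bool := (b, !b)

theorem mid_le_mid_iff {a b : Bool} : mid a ≤ mid b ↔ a = b := by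
  cases a <;> cases b <;> decide

theorem mid_ne_bot (b : Bool) : mid b ≠ ⊥ := by
  cases b <;> decide

theorem mid_ne_top (b : Bool) : mid b ≠ ⊤ := by
  cases b <;> decide

theorem eq_mid_fst_of_ne_bot_of_ne_top {p : Bool × Bool} (hbot : p ≠ ⊥) (htop : p ≠ ⊤) :
    p = mid p.1 := by
  revert p
  decide

variable {V : Type*} {G : V → V → Prop}

def interior (G : V → V → Prop) : Set V :=
  {v | (∃ u, G u v) ∧ (∃ u, G v u)}

theorem colorable_induce_interior {c : V → Bool × Bool} (hc : IsPosetColoring G c) :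
    ((undirected G).induce (interior G)).Colorable 2 := by
  have hmid : ∀ v ∈ interior G, c v = mid (c v).1 := fun v ⟨⟨u, huv⟩, ⟨w, hvw⟩⟩ =>
    eq_mid_fst_of_ne_bot_of_ne_top (hc.ne_bot_of_adj hvw) (hc.ne_top_of_adj huv)
  let C : ((undirected G).induce (interior G)).Coloring Bool :=
    SimpleGraph.Coloring.mk (fun v => (c v).1) fun {u v} hadj hfst => by
      have hcuv : c u = c v := by rw [hmid u u.2, hmid v v.2, hfst]
      rcases hadj.2 with h | h
      · exact hc u v h hcuv.le
      · exact hc v u h hcuv.ge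
  simpa using C.colorable

open Classical in
noncomputable def extendColoring (G : V → V → Prop) (b : V → Bool) (v : V) : Bool × Bool :=
  if ∃ u, G u v then (if ∃ u, G v u then mid (b v) else ⊥) else ⊤

theorem extendColoring_ne_top_of_adj {b : V → Bool} {u v : V} (h : G u v) :
    extendColoring G b v ≠ ⊤ := by
  unfold extendColoring
  split_ifs with hsrc
  · exact mid_ne_top _
  · exact bot_ne_top
  · exact absurd ⟨u, h⟩ hsrc

theorem extendColoring_ne_bot_of_adj {b : V → Bool} {u v : V} (h : G u v) :
    extendColoring G b u ≠ ⊥ := by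
  unfold extendColoring
  split_ifs with _ hsnk
  · exact mid_ne_bot _
  · exact absurd ⟨v, h⟩ hsnk
  · exact top_ne_bot

theorem isPosetColoring_extendColoring {b : V → Bool}
    (hb : ∀ u v, G u v → u ∈ interior G → v ∈ interior G → b u ≠ b v) :
    IsPosetColoring G (extendColoring G b) := by
  intro u v huv hle
  have hin : ∃ w, G w v := ⟨u, huv⟩
  have hout : ∃ w, G u w := ⟨v, huv⟩
  by_cases hu : ∃ w, G w u
  · by_cases hv : ∃ w, G v w
    · simp only [extendColoring, hu, hv, hin, hout, if_true] at hle
      exact hb u v huv ⟨hu, hout⟩ ⟨hin, hv⟩ (mid_le_mid_iff.mp hle)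
    · have hbot : extendColoring G b v = ⊥ := by simp [extendColoring, hv, hin]
      exact extendColoring_ne_bot_of_adj huv (le_bot_iff.mp (hbot ▸ hle))
  · have htop : extendColoring G b u = ⊤ := by simp [extendColoring, hu]
    exact extendColoring_ne_top_of_adj huv (top_le_iff.mp (htop ▸ hle))

end DiamondColoring

open DiamondColoring in
theorem diamond_coloring_iff_interior_bipartite_general {V : Type*}
    (G : V → V → Prop) (hG : ∀ v, ¬ G v v) :
    (∃ c : V → Bool × Bool, ∀ u v : V, G u v → ¬ c u ≤ c v) ↔
      ((undirected G).induce {v : V | (∃ u, G u v) ∧ (∃ u, G v u)}).Colorable 2 := by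
  classical
  refine ⟨fun ⟨c, hc⟩ => colorable_induce_interior hc, fun ⟨C⟩ => ?_⟩
  let b : V → Bool := fun v => if hv : v ∈ interior G then finTwoEquiv (C ⟨v, hv⟩) else false
  refine ⟨extendColoring G b, isPosetColoring_extendColoring fun u v huv hu hv => ?_⟩
  have hne : u ≠ v := fun h => hG u (h ▸ huv)
  simpa [b, hu, hv] using finTwoEquiv.injective.ne (C.valid (v := ⟨u, hu⟩) (w := ⟨v, hv⟩) ⟨hne, Or.inl huv⟩)

/-- **Diamond poset coloring characterizes bipartiteness of the interior.** Take the
diamond poset `{0, a, b, 1}` (with `0 < a < 1`, `0 < b < 1` and `a, b` incomparable),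
realized as `Bool × Bool` with the componentwise order.  A loopless digraph `G` on a
finite vertex set admits a `P`-coloring of its vertices (1-walks) iff the undirected
version of the subdigraph induced on the vertices that are neither sources nor sinks is
bipartite (2-colorable). -/
theorem diamond_coloring_iff_interior_bipartite {V : Type*} [Fintype V]
    (G : V → V → Prop) (hG : ∀ v, ¬ G v v) :
    (∃ c : V → Bool × Bool, ∀ u v : V, G u v → ¬ c u ≤ c v) ↔
      ((undirected G).induce {v : V | (∃ u, G u v) ∧ (∃ u, G v u)}).Colorable 2 :=
  diamond_coloring_iff_interior_bipartite_general G hG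
end

section
/- Sperner-type expansion example: Let G be a loopless digraph, and suppose the vertices (1-walks) of G admit a coloring by a trivially ordered set of n elements (i.e., a function c on vertices with c u ≠ c v whenever G u v). If n ≤ (r choose ⌈r/2⌉), then the edges (2-walks) of G can be colored by a set S of r elements so that for every 3-walk (v_1, v_2, v_3) the colors of the edges (v_1, v_2) and (v_2, v_3) differ. -/
/-!
Send the `n` vertex colours injectively to `⌈r/2⌉`-subsets of `Fin r`; equal-sized distinct sets
form an antichain (Sperner), so along an edge `(u, v)` the set of `u` has an element outside the
set of `v`, and that element colours the edge. For two consecutive edges `(u, v)`, `(v, w)` the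
first colour lies outside the set of `v` and the second inside it.
-/

theorem exists_edgeColoring_of_sdiff_nonempty {V α : Type*} [DecidableEq α] {G : V → V → Prop}
    (A : V → Finset α) (hA : ∀ u v, G u v → (A u \ A v).Nonempty) :
    ∃ d : {e : V × V // G e.1 e.2} → α,
      ∀ u v w (huv : G u v) (hvw : G v w), d ⟨(u, v), huv⟩ ≠ d ⟨(v, w), hvw⟩ := by
  choose d hd using hA
  refine ⟨fun e => d e.1.1 e.1.2 e.2, fun u v w huv hvw heq => ?_⟩
  have hout : d u v huv ∉ A v := (Finset.mem_sdiff.1 (hd u v huv)).2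
  have hin : d v w hvw ∈ A v := (Finset.mem_sdiff.1 (hd v w hvw)).1
  exact hout (by simpa only [heq] using hin)

theorem exists_injective_sized_family {α : Type*} [Fintype α] {n k : ℕ}
    (h : n ≤ (Fintype.card α).choose k) :
    ∃ A : Fin n → Finset α, Function.Injective A ∧ (Set.range A).Sized k := by
  classical
  obtain ⟨f⟩ : Nonempty (Fin n ↪ (Finset.powersetCard k (Finset.univ : Finset α))) :=
    Function.Embedding.nonempty_of_card_le (by simpa using h)
  refine ⟨fun i => (f i).1, fun i j hij => f.injective (Subtype.ext hij), ?_⟩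
  rintro _ ⟨i, rfl⟩
  exact (Finset.mem_powersetCard.1 (f i).2).2

/-- **Sperner-type expansion example.** Suppose the vertices of a loopless digraph `G`
admit a coloring by a trivially ordered set of `n` elements (`G u v → c u ≠ c v`).  If
`n ≤ (r choose ⌈r/2⌉)`, then the edges (2-walks) of `G` can be colored by a set of `r`
elements so that for every 3-walk `(v₁, v₂, v₃)` the colors of the edges `(v₁, v₂)` and
`(v₂, v₃)` differ. -/
theorem sperner_expansion_example {V : Type*} (G : V → V → Prop)
    (n r : ℕ) (hc : ∃ c : V → Fin n, ∀ u v : V, G u v → c u ≠ c v)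
    (hnr : n ≤ Nat.choose r ((r + 1) / 2)) :
    ∃ d : {e : V × V // G e.1 e.2} → Fin r,
      ∀ w : Fin 3 → V, ∀ hw : IsWalk G w,
        d ⟨(w ⟨0, by omega⟩, w ⟨1, by omega⟩), hw 0 (by omega)⟩ ≠
        d ⟨(w ⟨1, by omega⟩, w ⟨2, by omega⟩), hw 1 (by omega)⟩ := by
  obtain ⟨c, hc⟩ := hc
  obtain ⟨A, hA, hsized⟩ :=
    exists_injective_sized_family (α := Fin r) (by simpa using hnr)
  have hsdiff : ∀ u v, G u v → (A (c u) \ A (c v)).Nonempty := fun u v huv =>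
    Finset.sdiff_nonempty.2 <|
      hsized.isAntichain ⟨_, rfl⟩ ⟨_, rfl⟩ (hA.ne (hc u v huv))
  obtain ⟨d, hd⟩ := exists_edgeColoring_of_sdiff_nonempty (fun v => A (c v)) hsdiff
  exact ⟨d, fun w hw => hd _ _ _ _ _⟩
end
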